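/- arXiv:math/9903163 — 2 statements merged into one kernel-verified Lean document; each statement's English description precedes it below -/
import Mathlib

section
/- The ℂ-linear map from the external direct sum ⊕_{p∈ℤ} F p to the quotient ξ(V,F)/(λ·ξ(V,F)) that sends an element v of the p-th summand F p to the class of v ⊗ λ^{−p} is surjective, and its kernel is exactly ⊕_{p∈ℤ} F (p+1) (with F(p+1) regarded as a subspace of the p-th summand F p). In particular ξ(V,F)/(λ·ξ(V,F)) is ℂ-linearly isomorphic to the associated graded space ⊕_{p∈ℤ} F p / F (p+1). (This is the paper's assertion that the fiber of the Rees sheaf ξ(V,F) at 0 ∈ 𝔸¹ is the associated graded of V, so that ξ(V,F) is a canonical deformation of V to Gr_F(V).) -/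
/-!
Since `λ · (v ⊗ λ^{-p}) = v ⊗ λ^{-(p-1)}` and `F p ⊆ F (p-1)`, the ℂ-span of the generators
`v ⊗ λ^{-p}` (`v ∈ F p`) is already a `ℂ[λ]`-module, so it is `ξ(V,F)`. Consequently every
element of `ξ(V,F)` is a sum `Σ_p x_p ⊗ λ^{-p}` with `x_p ∈ F p`, its `λ^{-p}`-coefficient lies in
`F p`, and the map is onto. If `Σ_p x_p ⊗ λ^{-p} = λ · y` with `y ∈ ξ(V,F)`, comparing coefficients
of `λ^{-p}` shows that `x_p` is the `λ^{-p-1}`-coefficient of `y`, which lies in `F (p+1)`;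
conversely, for `v ∈ F (p+1)`, `v ⊗ λ^{-p} = λ · (v ⊗ λ^{-p-1})`. The isomorphism with the
associated graded follows from the first isomorphism theorem, the kernel being the kernel of
`⊕_p F p → ⊕_p F p / F (p+1)`.
-/

noncomputable section
open Polynomial LaurentPolynomial TensorProduct DirectSum

set_option maxSynthPendingDepth 3

/-- `ℂ[λ]` (that is, `Polynomial ℂ`) acts on `ℂ[λ,λ⁻¹]` (that is, `LaurentPolynomial ℂ`)
compatibly with the `ℂ`-actions. -/
instance : IsScalarTower ℂ (Polynomial ℂ) (LaurentPolynomial ℂ) :=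
  IsScalarTower.of_algebraMap_eq fun c => by
    simp [LaurentPolynomial.algebraMap_eq_toLaurent, Polynomial.algebraMap_eq]

/-- The Rees module `ξ(V,F)` of a filtered complex vector space `(V,F)`: the `ℂ[λ]`-submodule
of `V ⊗_ℂ ℂ[λ,λ⁻¹]` (realized here as `ℂ[λ,λ⁻¹] ⊗_ℂ V`) generated by the elements
`v ⊗ λ^{-p} = T (-p) ⊗ v` with `p ∈ ℤ` and `v ∈ F p`. -/
def ReesModule (V : Type*) [AddCommGroup V] [Module ℂ V] (F : ℤ → Submodule ℂ V) :
    Submodule (Polynomial ℂ) ((LaurentPolynomial ℂ) ⊗[ℂ] V) :=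
  Submodule.span (Polynomial ℂ)
    {x | ∃ (p : ℤ) (v : V), v ∈ F p ∧ x = (LaurentPolynomial.T (-p)) ⊗ₜ[ℂ] v}

variable {V : Type*} [AddCommGroup V] [Module ℂ V] (F : ℤ → Submodule ℂ V)

/-- `λ·ξ(V,F)`, as a `ℂ[λ]`-submodule of `ξ(V,F)`. -/
def lambdaRees : Submodule (Polynomial ℂ) ↥(ReesModule V F) :=
  Ideal.span {(Polynomial.X : Polynomial ℂ)} • ⊤

/-- The `ℂ`-linear map `F p → ξ(V,F)/(λ·ξ(V,F))` sending `v` to the class of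
`v ⊗ λ^{-p} = T (-p) ⊗ v`. -/
def gradedToReesFiberZero (p : ℤ) :
    ↥(F p) →ₗ[ℂ] (↥(ReesModule V F) ⧸ lambdaRees F) :=
  ((lambdaRees F).mkQ.restrictScalars ℂ).comp
    (LinearMap.codRestrict ((ReesModule V F).restrictScalars ℂ)
      ((TensorProduct.mk ℂ (LaurentPolynomial ℂ) V (LaurentPolynomial.T (-p))).comp
        (F p).subtype)
      (fun v => Submodule.subset_span ⟨p, v.1, v.2, rfl⟩))

/-- The `ℂ`-linear map `⊕_p F p → ξ(V,F)/(λ·ξ(V,F))` sending an element `v` of the `p`-th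
summand to the class of `v ⊗ λ^{-p}`. -/
def reesGradedMap : (⨁ p : ℤ, ↥(F p)) →ₗ[ℂ] (↥(ReesModule V F) ⧸ lambdaRees F) :=
  DirectSum.toModule ℂ ℤ _ (gradedToReesFiberZero F)

namespace LaurentPolynomial

variable {R M : Type*} [CommSemiring R] [AddCommMonoid M] [Module R M]

def lcoeff (n : ℤ) : R[T;T⁻¹] →ₗ[R] R :=
  Finsupp.lapply n ∘ₗ (AddMonoidAlgebra.coeffLinearEquiv R).toLinearMap

theorem coeff_T_one_mul (f : R[T;T⁻¹]) (n : ℤ) : (T 1 * f).coeff n = f.coeff (n - 1) := by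
  rw [T, AddMonoidAlgebra.coeff_single_mul_apply, one_mul, ← sub_eq_neg_add]

/-- The `n`-th coefficient of an element of `R[T;T⁻¹] ⊗[R] M`, viewed as a Laurent polynomial
with coefficients in `M`. -/
def tensorCoeff (n : ℤ) : R[T;T⁻¹] ⊗[R] M →ₗ[R] M :=
  TensorProduct.lift (LinearMap.lsmul R M ∘ₗ lcoeff n)

@[simp]
theorem tensorCoeff_tmul (n : ℤ) (f : R[T;T⁻¹]) (m : M) :
    tensorCoeff n (f ⊗ₜ[R] m) = f.coeff n • m := rfl

theorem tensorCoeff_T_tmul (k n : ℤ) (m : M) :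
    tensorCoeff n (T k ⊗ₜ[R] m) = if k = n then m else 0 := by
  split_ifs <;> simp [*]

theorem X_smul_tmul (f : ℂ[T;T⁻¹]) (v : V) :
    (X : ℂ[X]) • (f ⊗ₜ[ℂ] v) = (T 1 * f) ⊗ₜ[ℂ] v := by
  rw [TensorProduct.smul_tmul', Algebra.smul_def, algebraMap_eq_toLaurent, Polynomial.toLaurent_X]

theorem X_smul_T_tmul (k : ℤ) (v : V) :
    (X : ℂ[X]) • ((T k : ℂ[T;T⁻¹]) ⊗ₜ[ℂ] v) = T (k + 1) ⊗ₜ[ℂ] v := by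
  rw [X_smul_tmul, ← T_add, add_comm]

theorem tensorCoeff_X_smul (n : ℤ) (z : ℂ[T;T⁻¹] ⊗[ℂ] V) :
    tensorCoeff n ((X : ℂ[X]) • z) = tensorCoeff (n - 1) z := by
  induction z using TensorProduct.induction_on with
  | zero => simp
  | tmul f v => rw [X_smul_tmul, tensorCoeff_tmul, tensorCoeff_tmul, coeff_T_one_mul]
  | add a b ha hb => rw [smul_add, map_add, map_add, ha, hb]

end LaurentPolynomial

theorem Submodule.polynomial_smul_mem {R M : Type*} [CommSemiring R] [AddCommMonoid M]
    [Module R M] [Module R[X] M] [IsScalarTower R R[X] M] (N : Submodule R M)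
    (hX : ∀ x ∈ N, (X : R[X]) • x ∈ N) (q : R[X]) {x : M} (hx : x ∈ N) : q • x ∈ N := by
  have hXpow : ∀ k : ℕ, (X ^ k : R[X]) • x ∈ N := fun k => by
    induction k with
    | zero => simpa using hx
    | succ k ih => rw [pow_succ', mul_smul]; exact hX _ ih
  induction q using Polynomial.induction_on' with
  | add p q hp hq => rw [add_smul]; exact add_mem hp hq
  | monomial n a =>
    rw [← C_mul_X_pow_eq_monomial, mul_smul, ← Polynomial.algebraMap_eq, algebraMap_smul]
    exact N.smul_mem a (hXpow n)

def LinearMap.equivDirectSumQuotient {R ι Q : Type*} {M : ι → Type*} [Ring R] [DecidableEq ι]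
    [∀ i, AddCommGroup (M i)] [∀ i, Module R (M i)] [AddCommGroup Q] [Module R Q]
    (f : (⨁ i, M i) →ₗ[R] Q) (hf : Function.Surjective f) (N : ∀ i, Submodule R (M i))
    (hker : ∀ x, f x = 0 ↔ ∀ i, x i ∈ N i) : Q ≃ₗ[R] ⨁ i, M i ⧸ N i :=
  (f.quotKerEquivOfSurjective hf).symm ≪≫ₗ
    Submodule.quotEquivOfEq _ _ (by ext x; simp [hker, DirectSum.ker_lmap]) ≪≫ₗ
    (DirectSum.lmap fun i => (N i).mkQ).quotKerEquivOfSurjective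
      (DirectSum.lmap_surjective _ |>.2 fun i => (N i).mkQ_surjective)

def reesGenerators : Set (ℂ[T;T⁻¹] ⊗[ℂ] V) :=
  {x | ∃ (p : ℤ) (v : V), v ∈ F p ∧ x = (T (-p)) ⊗ₜ[ℂ] v}

def reesSum : (⨁ p : ℤ, ↥(F p)) →ₗ[ℂ] ℂ[T;T⁻¹] ⊗[ℂ] V :=
  DirectSum.toModule ℂ ℤ _ fun p => TensorProduct.mk ℂ ℂ[T;T⁻¹] V (T (-p)) ∘ₗ (F p).subtype

variable {F}

namespace ReesModule

theorem restrictScalars_eq_span (hdec : ∀ p : ℤ, F (p + 1) ≤ F p) :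
    (ReesModule V F).restrictScalars ℂ = Submodule.span ℂ (reesGenerators F) := by
  refine le_antisymm ?_ (Submodule.span_le_restrictScalars ℂ ℂ[X] _)
  have hX : ∀ z ∈ Submodule.span ℂ (reesGenerators F),
      (X : ℂ[X]) • z ∈ Submodule.span ℂ (reesGenerators F) := by
    intro z hz
    induction hz using Submodule.span_induction with
    | mem z hz =>
      obtain ⟨p, v, hv, rfl⟩ := hz
      refine Submodule.subset_span ⟨p - 1, v, hdec (p - 1) (by rwa [sub_add_cancel]), ?_⟩
      rw [X_smul_T_tmul, neg_sub, sub_eq_neg_add]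
    | zero => simp
    | add a b _ _ ha hb => rw [smul_add]; exact add_mem ha hb
    | smul c a _ ha => rw [smul_comm]; exact Submodule.smul_mem _ _ ha
  let N : Submodule ℂ[X] (ℂ[T;T⁻¹] ⊗[ℂ] V) :=
    { Submodule.span ℂ (reesGenerators F) with
      smul_mem' := fun q _ hz => Submodule.polynomial_smul_mem _ hX q hz }
  exact (Submodule.restrictScalars_le ℂ).2 ((Submodule.span_le (p := N)).2 Submodule.subset_span)

theorem tensorCoeff_mem (hdec : ∀ p : ℤ, F (p + 1) ≤ F p) {z : ℂ[T;T⁻¹] ⊗[ℂ] V}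
    (hz : z ∈ ReesModule V F) (n : ℤ) : tensorCoeff n z ∈ F (-n) := by
  rw [← Submodule.restrictScalars_mem ℂ, restrictScalars_eq_span hdec] at hz
  induction hz using Submodule.span_induction with
  | mem z hz =>
    obtain ⟨p, v, hv, rfl⟩ := hz
    rw [tensorCoeff_T_tmul]
    split_ifs with h
    · rwa [← h, neg_neg]
    · exact zero_mem _
  | zero => simp
  | add a b _ _ ha hb => rw [map_add]; exact add_mem ha hb
  | smul c a _ ha => rw [map_smul]; exact Submodule.smul_mem _ _ ha

end ReesModule

@[simp]
theorem reesSum_lof (p : ℤ) (v : F p) :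
    reesSum F (DirectSum.lof ℂ ℤ (fun p => ↥(F p)) p v) = T (-p) ⊗ₜ[ℂ] (v : V) := by
  rw [reesSum, DirectSum.toModule_lof]
  rfl

theorem range_reesSum : LinearMap.range (reesSum F) = Submodule.span ℂ (reesGenerators F) := by
  refine le_antisymm ?_ (Submodule.span_le.2 ?_)
  · rintro _ ⟨x, rfl⟩
    induction x using DirectSum.induction_on with
    | zero => simp
    | of p v =>
      rw [← DirectSum.lof_eq_of ℂ, reesSum_lof]
      exact Submodule.subset_span ⟨p, v, v.2, rfl⟩
    | add x y hx hy => rw [map_add]; exact add_mem hx hy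
  · rintro _ ⟨p, v, hv, rfl⟩
    exact ⟨DirectSum.lof ℂ ℤ _ p ⟨v, hv⟩, reesSum_lof p _⟩

theorem reesSum_mem (x : ⨁ p : ℤ, ↥(F p)) : reesSum F x ∈ ReesModule V F := by
  have hx := LinearMap.mem_range_self (reesSum F) x
  rw [range_reesSum] at hx
  exact Submodule.span_le_restrictScalars ℂ ℂ[X] _ hx

theorem reesGradedMap_apply (x : ⨁ p : ℤ, ↥(F p)) :
    reesGradedMap F x = Submodule.Quotient.mk ⟨reesSum F x, reesSum_mem x⟩ := by
  induction x using DirectSum.induction_on with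
  | zero => simp only [map_zero]; rfl
  | of p v =>
    rw [reesGradedMap, ← DirectSum.lof_eq_of ℂ, DirectSum.toModule_lof]
    exact congrArg Submodule.Quotient.mk (Subtype.ext (reesSum_lof p v).symm)
  | add x y hx hy =>
    rw [map_add, hx, hy, ← Submodule.Quotient.mk_add]
    simp_rw [map_add]
    rfl

theorem tensorCoeff_reesSum (x : ⨁ p : ℤ, ↥(F p)) (n : ℤ) :
    tensorCoeff n (reesSum F x) = x (-n) := by
  induction x using DirectSum.induction_on with
  | zero => simp
  | of p v =>
    rw [← DirectSum.lof_eq_of ℂ, reesSum_lof, DirectSum.lof_eq_of, DirectSum.coe_of_apply,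
      tensorCoeff_T_tmul]
    split_ifs <;> simp_all [neg_eq_iff_eq_neg]
  | add x y hx hy => simp [hx, hy]

theorem mem_lambdaRees_iff {z : ReesModule V F} :
    z ∈ lambdaRees F ↔ ∃ y : ReesModule V F, (X : ℂ[X]) • y = z := by
  simp [lambdaRees, Submodule.ideal_span_singleton_smul, Submodule.mem_smul_pointwise_iff_exists]

theorem gradedToReesFiberZero_eq_zero {p : ℤ} (v : F p) (hv : (v : V) ∈ F (p + 1)) :
    gradedToReesFiberZero F p v = 0 := by
  refine (Submodule.Quotient.mk_eq_zero _).2 <| mem_lambdaRees_iff.2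
    ⟨⟨_, Submodule.subset_span ⟨p + 1, v, hv, rfl⟩⟩, Subtype.ext ?_⟩
  change (X : ℂ[X]) • ((T (-(p + 1)) : ℂ[T;T⁻¹]) ⊗ₜ[ℂ] (v : V)) = T (-p) ⊗ₜ[ℂ] (v : V)
  rw [X_smul_T_tmul, neg_add, neg_add_cancel_right]

theorem reesGradedMap_surjective (hdec : ∀ p : ℤ, F (p + 1) ≤ F p) :
    Function.Surjective (reesGradedMap F) := by
  intro q
  obtain ⟨⟨z, hz⟩, rfl⟩ := Submodule.mkQ_surjective _ q
  rw [← Submodule.restrictScalars_mem ℂ, ReesModule.restrictScalars_eq_span hdec,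
    ← range_reesSum] at hz
  obtain ⟨x, rfl⟩ := hz
  exact ⟨x, reesGradedMap_apply x⟩

theorem reesGradedMap_eq_zero_iff (hdec : ∀ p : ℤ, F (p + 1) ≤ F p) (x : ⨁ p : ℤ, ↥(F p)) :
    reesGradedMap F x = 0 ↔ ∀ p : ℤ, (x p : V) ∈ F (p + 1) := by
  constructor
  · intro hx p
    rw [reesGradedMap_apply, Submodule.Quotient.mk_eq_zero, mem_lambdaRees_iff] at hx
    obtain ⟨y, hy⟩ := hx
    have hcoeff := congrArg (tensorCoeff (-p) ∘ Subtype.val) hy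
    simp only [Function.comp_apply, Submodule.coe_smul, tensorCoeff_X_smul] at hcoeff
    rw [tensorCoeff_reesSum, neg_neg] at hcoeff
    simpa [← hcoeff, add_comm] using ReesModule.tensorCoeff_mem hdec y.2 (-p - 1)
  · intro hx
    classical
    rw [← DirectSum.sum_support_of x, map_sum]
    refine Finset.sum_eq_zero fun p _ => ?_
    rw [reesGradedMap, ← DirectSum.lof_eq_of ℂ, DirectSum.toModule_lof]
    exact gradedToReesFiberZero_eq_zero (x p) (hx p)

theorem reesModule_fiber_zero_eq_gr_general
    (hdec : ∀ p : ℤ, F (p + 1) ≤ F p) :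
    Function.Surjective (reesGradedMap F) ∧
    (∀ x : ⨁ p : ℤ, ↥(F p), reesGradedMap F x = 0 ↔ ∀ p : ℤ, (x p : V) ∈ F (p + 1)) ∧
    Nonempty ((↥(ReesModule V F) ⧸ lambdaRees F) ≃ₗ[ℂ]
      ⨁ p : ℤ, (↥(F p) ⧸ Submodule.comap (F p).subtype (F (p + 1)))) :=
  ⟨reesGradedMap_surjective hdec, reesGradedMap_eq_zero_iff hdec,
    ⟨(reesGradedMap F).equivDirectSumQuotient (reesGradedMap_surjective hdec) _
      (reesGradedMap_eq_zero_iff hdec)⟩⟩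

/-- For a finite-dimensional complex vector space `V` with a decreasing,
finite and exhaustive filtration `F`, the `ℂ`-linear map `⊕_p F p → ξ(V,F)/(λ·ξ(V,F))`,
`v ↦ [v ⊗ λ^{-p}]`, is surjective with kernel exactly `⊕_p F (p+1)`; in particular
`ξ(V,F)/(λ·ξ(V,F))` is `ℂ`-linearly isomorphic to the associated graded `⊕_p F p / F (p+1)`. -/
theorem reesModule_fiber_zero_eq_gr
    [FiniteDimensional ℂ V]
    (hdec : ∀ p : ℤ, F (p + 1) ≤ F p)
    (hfin : ∃ a b : ℤ, a ≤ b ∧ (∀ p ≤ a, F p = ⊤) ∧ (∀ p, b ≤ p → F p = ⊥)) :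
    Function.Surjective (reesGradedMap F) ∧
    (∀ x : ⨁ p : ℤ, ↥(F p), reesGradedMap F x = 0 ↔ ∀ p : ℤ, (x p : V) ∈ F (p + 1)) ∧
    Nonempty ((↥(ReesModule V F) ⧸ lambdaRees F) ≃ₗ[ℂ]
      ⨁ p : ℤ, (↥(F p) ⧸ Submodule.comap (F p).subtype (F (p + 1)))) :=
  reesModule_fiber_zero_eq_gr_general hdec
end
end

section
/- Let f : V → W be a ℂ-linear map between two finite exhaustively and decreasingly filtered finite-dimensional complex vector spaces (V,F) and (W,G) with f(F p) ⊆ G p for all p. Then an element x of the Rees module ξ(V,F) satisfies (f ⊗ id)(x) = 0 if and only if x lies in the Rees module ξ(ker f, F') of the kernel of f equipped with the induced filtration F' p := F p ∩ ker f; that is, ker(f ⊗ id) ∩ ξ(V,F) = ξ(ker f, F') as ℂ[λ]-submodules of V ⊗_ℂ ℂ[λ,λ⁻¹]. (This is the paper's assertion that the Rees construction respects kernels: ker(ξ(f)) = ξ(ker(f)).) -/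
noncomputable section
open Polynomial LaurentPolynomial TensorProduct

set_option maxSynthPendingDepth 3

/-! Under `ℂ[λ,λ⁻¹] ⊗ V ≃ (ℤ →₀ V)`, the Rees module of a decreasing filtration is exactly the set
of `x` whose `λⁿ`-coefficient lies in `F (-n)`: the generators satisfy this, and multiplication by
`λᵏ` (`k ≥ 0`) moves the coefficient of `λⁿ⁻ᵏ`, which lies in `F (k - n) ≤ F (-n)`, to `λⁿ`.
Since `f ⊗ id` acts coefficientwise, `x ∈ ξ(ker f, F')` and `x ∈ ξ(V,F) ∧ (f ⊗ id) x = 0` become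
the same condition on coefficients. -/

section LaurentCoeff

variable (R M : Type*) [CommSemiring R] [AddCommMonoid M] [Module R M]

def laurentCoeffEquiv : R[T;T⁻¹] ⊗[R] M ≃ₗ[R] ℤ →₀ M :=
  TensorProduct.equivFinsuppOfBasisLeft (AddMonoidAlgebra.basis ℤ R)

variable {R M} {N : Type*} [AddCommMonoid N] [Module R N]

lemma laurentCoeffEquiv_tmul_apply (a : R[T;T⁻¹]) (v : M) (n : ℤ) :
    laurentCoeffEquiv R M (a ⊗ₜ v) n = a.coeff n • v := by
  rw [laurentCoeffEquiv, TensorProduct.equivFinsuppOfBasisLeft_apply_tmul_apply]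
  rfl

@[simp]
lemma laurentCoeffEquiv_T_tmul (m : ℤ) (v : M) :
    laurentCoeffEquiv R M (T m ⊗ₜ v) = Finsupp.single m v := by
  ext n
  rw [laurentCoeffEquiv_tmul_apply, T_apply, Finsupp.single_apply]
  split_ifs <;> simp

lemma laurentCoeffEquiv_symm_apply (c : ℤ →₀ M) :
    (laurentCoeffEquiv R M).symm c = c.sum fun n v => (T n : R[T;T⁻¹]) ⊗ₜ v := by
  simp [laurentCoeffEquiv]

lemma laurentCoeffEquiv_T_smul_apply (k n : ℤ) (x : R[T;T⁻¹] ⊗[R] M) :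
    laurentCoeffEquiv R M ((T k : R[T;T⁻¹]) • x) n = laurentCoeffEquiv R M x (n - k) := by
  induction x with
  | zero => simp
  | tmul a v =>
    rw [smul_tmul', smul_eq_mul, laurentCoeffEquiv_tmul_apply, laurentCoeffEquiv_tmul_apply, T,
      AddMonoidAlgebra.coeff_single_mul_apply, one_mul, neg_add_eq_sub]
  | add y z hy hz => simp [smul_add, hy, hz]

lemma laurentCoeffEquiv_baseChange_apply (f : M →ₗ[R] N) (x : R[T;T⁻¹] ⊗[R] M) (n : ℤ) :
    laurentCoeffEquiv R N (f.baseChange R[T;T⁻¹] x) n = f (laurentCoeffEquiv R M x n) := by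
  induction x with
  | zero => simp
  | tmul a v => simp [laurentCoeffEquiv_tmul_apply]
  | add y z hy hz => simp [hy, hz]

lemma baseChange_eq_zero_iff_forall_laurentCoeffEquiv (f : M →ₗ[R] N) (x : R[T;T⁻¹] ⊗[R] M) :
    f.baseChange R[T;T⁻¹] x = 0 ↔ ∀ n, f (laurentCoeffEquiv R M x n) = 0 := by
  rw [← EmbeddingLike.map_eq_zero_iff (f := laurentCoeffEquiv R N), Finsupp.ext_iff]
  simp only [laurentCoeffEquiv_baseChange_apply, Finsupp.coe_zero, Pi.zero_apply]

end LaurentCoeff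

section ReesModule

variable {V : Type*} [AddCommGroup V] [Module ℂ V] {F : ℤ → Submodule ℂ V}

lemma laurentCoeffEquiv_polynomial_smul_mem (hF : Antitone F) {x : ℂ[T;T⁻¹] ⊗[ℂ] V}
    (hx : ∀ n, laurentCoeffEquiv ℂ V x n ∈ F (-n)) (q : ℂ[X]) (n : ℤ) :
    laurentCoeffEquiv ℂ V (q • x) n ∈ F (-n) := by
  induction q using Polynomial.induction_on' generalizing n with
  | add p r hp hr => simpa [add_smul] using add_mem (hp n) (hr n)
  | monomial k a =>
    rw [← smul_X_eq_monomial, smul_assoc, map_smul, Finsupp.smul_apply,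
      ← algebraMap_smul ℂ[T;T⁻¹] (X ^ k : ℂ[X]), algebraMap_eq_toLaurent, toLaurent_X_pow,
      laurentCoeffEquiv_T_smul_apply]
    exact Submodule.smul_mem _ _ (hF (by omega) (hx _))

lemma mem_reesModule_iff (hF : Antitone F) {x : ℂ[T;T⁻¹] ⊗[ℂ] V} :
    x ∈ ReesModule V F ↔ ∀ n, laurentCoeffEquiv ℂ V x n ∈ F (-n) := by
  constructor
  · intro hx
    induction hx using Submodule.span_induction with
    | mem y hy =>
      obtain ⟨p, v, hv, rfl⟩ := hy
      intro n
      rw [laurentCoeffEquiv_T_tmul, Finsupp.single_apply]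
      split_ifs with h
      · exact hF (by omega) hv
      · exact zero_mem _
    | zero => simp
    | add y z _ _ hy hz => simpa using fun n => add_mem (hy n) (hz n)
    | smul q y _ hy => exact laurentCoeffEquiv_polynomial_smul_mem hF hy q
  · intro hx
    rw [← (laurentCoeffEquiv ℂ V).symm_apply_apply x, laurentCoeffEquiv_symm_apply]
    refine Submodule.finsuppSum_mem _ _ _ _ fun n _ => Submodule.subset_span ⟨-n, _, hx n, ?_⟩
    rw [neg_neg]

lemma mem_reesModule_inf_ker_iff {W : Type*} [AddCommGroup W] [Module ℂ W] (hF : Antitone F)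
    (f : V →ₗ[ℂ] W) {x : ℂ[T;T⁻¹] ⊗[ℂ] V} :
    x ∈ ReesModule V (fun p => F p ⊓ LinearMap.ker f) ↔
      x ∈ ReesModule V F ∧ f.baseChange ℂ[T;T⁻¹] x = 0 := by
  rw [mem_reesModule_iff fun _ _ h => inf_le_inf_right _ (hF h), mem_reesModule_iff hF,
    baseChange_eq_zero_iff_forall_laurentCoeffEquiv, ← forall_and]
  simp only [Submodule.mem_inf, LinearMap.mem_ker]

end ReesModule

theorem reesModule_ker_general
    (V : Type*) [AddCommGroup V] [Module ℂ V]
    (W : Type*) [AddCommGroup W] [Module ℂ W]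
    (F : ℤ → Submodule ℂ V)
    (hFdec : ∀ p : ℤ, F (p + 1) ≤ F p)
    (f : V →ₗ[ℂ] W) :
    (∀ x ∈ ReesModule V F,
      ((f.baseChange (LaurentPolynomial ℂ)) x = 0 ↔
        x ∈ ReesModule V (fun p => F p ⊓ LinearMap.ker f))) ∧
    ReesModule V F ⊓
        LinearMap.ker ((f.baseChange (LaurentPolynomial ℂ)).restrictScalars (Polynomial ℂ))
      = ReesModule V (fun p => F p ⊓ LinearMap.ker f) := by
  have hF : Antitone F := antitone_int_of_succ_le hFdec
  refine ⟨fun x hx => ?_, ?_⟩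
  · rw [mem_reesModule_inf_ker_iff hF]
    exact (and_iff_right hx).symm
  · ext x
    rw [mem_reesModule_inf_ker_iff hF]
    rfl

/-- Let `f : (V,F) → (W,G)` be a `ℂ`-linear map of finite
exhaustively and decreasingly filtered finite-dimensional complex vector spaces with
`f (F p) ⊆ G p` for all `p`.  Then an element `x ∈ ξ(V,F)` satisfies `(f ⊗ id) x = 0`
iff `x` lies in the Rees module `ξ(ker f, F')` of the kernel with its induced filtration
`F' p = F p ⊓ ker f`; that is, `ker (f ⊗ id) ∩ ξ(V,F) = ξ(ker f, F')` as
`ℂ[λ]`-submodules of `V ⊗_ℂ ℂ[λ,λ⁻¹]`. -/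
theorem reesModule_ker
    (V : Type*) [AddCommGroup V] [Module ℂ V] [FiniteDimensional ℂ V]
    (W : Type*) [AddCommGroup W] [Module ℂ W] [FiniteDimensional ℂ W]
    (F : ℤ → Submodule ℂ V) (G : ℤ → Submodule ℂ W)
    (hFdec : ∀ p : ℤ, F (p + 1) ≤ F p)
    (hFfin : ∃ a b : ℤ, a ≤ b ∧ (∀ p ≤ a, F p = ⊤) ∧ (∀ p, b ≤ p → F p = ⊥))
    (hGdec : ∀ p : ℤ, G (p + 1) ≤ G p)
    (hGfin : ∃ a b : ℤ, a ≤ b ∧ (∀ p ≤ a, G p = ⊤) ∧ (∀ p, b ≤ p → G p = ⊥))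
    (f : V →ₗ[ℂ] W) (hf : ∀ p : ℤ, (F p).map f ≤ G p) :
    (∀ x ∈ ReesModule V F,
      ((f.baseChange (LaurentPolynomial ℂ)) x = 0 ↔
        x ∈ ReesModule V (fun p => F p ⊓ LinearMap.ker f))) ∧
    ReesModule V F ⊓
        LinearMap.ker ((f.baseChange (LaurentPolynomial ℂ)).restrictScalars (Polynomial ℂ))
      = ReesModule V (fun p => F p ⊓ LinearMap.ker f) :=
  reesModule_ker_general V W F hFdec f
end
end
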